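/- arXiv:1506.02951 — 2 statements merged into one kernel-verified Lean document; each statement's English description precedes it below -/
import Mathlib

section
/- For 0 < β < 1 and c > 0, c^β + ∫₀^∞ (1 - e^{-φt}) (β/Γ(1-β)) t^{-β-1} e^{-ct} dt = (φ + c)^β for all φ > 0. -/
/-!
Since `(1 - e^{-φt}) e^{-ct} = (1 - e^{-(φ+c)t}) - (1 - e^{-ct})`, the integral is a difference of
two values of the Laplace exponent of the `β`-stable subordinator,
`∫₀^∞ (1 - e^{-bt}) t^{-β-1} dt = Γ(1-β) b^β / β`.
That formula follows by integrating by parts against `-t^{-β}/β`: the boundary terms vanish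
because `1 - e^{-bt} ≤ bt` near `0` and `t^{-β} → 0` at `∞`, and what remains is
`(b/β) ∫₀^∞ t^{-β} e^{-bt} dt = (b/β) b^{β-1} Γ(1-β)`.
-/

open MeasureTheory Set
open Real Filter Topology

section StableLaplaceExponent

variable {β b : ℝ}

lemma one_sub_exp_neg_nonneg {x : ℝ} (hx : 0 ≤ x) : 0 ≤ 1 - exp (-x) := by
  simpa using exp_le_one_iff.mpr (neg_nonpos.mpr hx)

lemma one_sub_exp_neg_mul_mul_rpow_le {t : ℝ} (ht : 0 < t) (s : ℝ) :
    (1 - exp (-(b * t))) * t ^ s ≤ b * t ^ (s + 1) :=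
  calc (1 - exp (-(b * t))) * t ^ s ≤ b * t * t ^ s := by
        gcongr; linarith [one_sub_le_exp_neg (b * t)]
    _ = b * t ^ (s + 1) := by rw [rpow_add_one ht.ne']; ring

lemma integrableOn_one_sub_exp_neg_mul_mul_rpow (hβ : 0 < β) (hβ1 : β < 1) (hb : 0 ≤ b) :
    IntegrableOn (fun t : ℝ => (1 - exp (-(b * t))) * t ^ (-β - 1)) (Ioi 0) := by
  have hcont : ContinuousOn (fun t : ℝ => (1 - exp (-(b * t))) * t ^ (-β - 1)) (Ioi 0) := by
    fun_prop (disch := exact fun t ht => ne_of_gt ht)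
  rw [← Ioc_union_Ioi_eq_Ioi zero_le_one]
  refine IntegrableOn.union ?_ ?_
  · refine Integrable.mono' (((intervalIntegral.intervalIntegrable_rpow' (r := -β)
      (by linarith)).1).const_mul b)
      ((hcont.mono Ioc_subset_Ioi_self).aestronglyMeasurable measurableSet_Ioc) ?_
    filter_upwards [ae_restrict_mem measurableSet_Ioc] with t ht
    rw [norm_of_nonneg (mul_nonneg (one_sub_exp_neg_nonneg (mul_nonneg hb ht.1.le))
      (rpow_nonneg ht.1.le _))]
    simpa using one_sub_exp_neg_mul_mul_rpow_le ht.1 (-β - 1)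
  · refine Integrable.mono' (integrableOn_Ioi_rpow_of_lt (a := -β - 1) (by linarith) zero_lt_one)
      ((hcont.mono (Ioi_subset_Ioi zero_le_one)).aestronglyMeasurable measurableSet_Ioi) ?_
    filter_upwards [ae_restrict_mem measurableSet_Ioi] with t (ht : 1 < t)
    have hpos := one_sub_exp_neg_nonneg (mul_nonneg hb (by linarith : (0:ℝ) ≤ t))
    rw [norm_of_nonneg (by positivity)]
    refine mul_le_of_le_one_left (by positivity) ?_
    linarith [exp_pos (-(b * t))]

lemma tendsto_one_sub_exp_neg_mul_mul_rpow_nhdsGT_zero (hβ1 : β < 1) (hb : 0 ≤ b) :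
    Tendsto (fun t : ℝ => (1 - exp (-(b * t))) * t ^ (-β)) (𝓝[>] 0) (𝓝 0) := by
  have hlim : Tendsto (fun t : ℝ => b * t ^ (-β + 1)) (𝓝[>] 0) (𝓝 0) := by
    have := ((continuousAt_rpow_const 0 (-β + 1) (Or.inr (by linarith))).tendsto.const_mul
      b).mono_left (nhdsWithin_le_nhds (s := Ioi 0))
    simpa [zero_rpow (by linarith : -β + 1 ≠ 0)] using this
  refine squeeze_zero' ?_ ?_ hlim <;> filter_upwards [self_mem_nhdsWithin] with t (ht : 0 < t)
  · exact mul_nonneg (one_sub_exp_neg_nonneg (by positivity)) (by positivity)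
  · exact one_sub_exp_neg_mul_mul_rpow_le ht (-β)

lemma tendsto_one_sub_exp_neg_mul_mul_rpow_atTop (hβ : 0 < β) (hb : 0 < b) :
    Tendsto (fun t : ℝ => (1 - exp (-(b * t))) * t ^ (-β)) atTop (𝓝 0) := by
  have hexp : Tendsto (fun t : ℝ => exp (-(b * t))) atTop (𝓝 0) :=
    tendsto_exp_neg_atTop_nhds_zero.comp (tendsto_id.const_mul_atTop hb)
  simpa using (tendsto_const_nhds.sub hexp).mul (tendsto_rpow_neg_atTop hβ)

lemma integral_rpow_neg_mul_exp_neg_mul (hβ1 : β < 1) (hb : 0 < b) :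
    ∫ t in Ioi (0 : ℝ), t ^ (-β) * exp (-(b * t)) = b ^ (β - 1) * Gamma (1 - β) := by
  have h := integral_rpow_mul_exp_neg_mul_Ioi (a := 1 - β) (by linarith) hb
  rwa [sub_sub_cancel_left, one_div, inv_rpow hb.le, ← rpow_neg hb.le, neg_sub] at h

theorem integral_one_sub_exp_neg_mul_mul_rpow (hβ : 0 < β) (hβ1 : β < 1) (hb : 0 < b) :
    ∫ t in Ioi (0 : ℝ), (1 - exp (-(b * t))) * t ^ (-β - 1) = Gamma (1 - β) / β * b ^ β := by
  have hu (t : ℝ) : HasDerivAt (fun t => 1 - exp (-(b * t))) (exp (-(b * t)) * b) t := by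
    simpa using ((hasDerivAt_id t).const_mul b).neg.exp.const_sub 1
  have hv (t : ℝ) (ht : t ∈ Ioi (0 : ℝ)) :
      HasDerivAt (fun t => -t ^ (-β) / β) (t ^ (-β - 1)) t := by
    refine ((hasDerivAt_rpow_const (p := -β) (Or.inl (ne_of_gt ht))).fun_neg.div_const
      β).congr_deriv ?_
    field_simp
  have huv (l : Filter ℝ)
      (h : Tendsto (fun t : ℝ => (1 - exp (-(b * t))) * t ^ (-β)) l (𝓝 0)) :
      Tendsto (fun t => (1 - exp (-(b * t))) * (-t ^ (-β) / β)) l (𝓝 0) := by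
    simpa [mul_neg, mul_div_assoc'] using (h.neg.div_const β)
  have hu'v : (fun t : ℝ => exp (-(b * t)) * b * (-t ^ (-β) / β))
      = fun t => -(b / β) * (t ^ (-β) * exp (-(b * t))) := by
    ext t; ring
  have hint : IntegrableOn (fun t : ℝ => exp (-(b * t)) * b * (-t ^ (-β) / β)) (Ioi 0) := by
    have h := integrableOn_rpow_mul_exp_neg_mul_rpow (s := -β) (p := 1) (by linarith) one_pos hb
    simp only [rpow_one, neg_mul] at h
    exact hu'v ▸ h.const_mul _
  rw [integral_Ioi_mul_deriv_eq_deriv_mul (fun t _ => hu t) hv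
      (integrableOn_one_sub_exp_neg_mul_mul_rpow hβ hβ1 hb.le) hint
      (huv _ (tendsto_one_sub_exp_neg_mul_mul_rpow_nhdsGT_zero hβ1 hb.le))
      (huv _ (tendsto_one_sub_exp_neg_mul_mul_rpow_atTop hβ hb)),
    hu'v, integral_const_mul, integral_rpow_neg_mul_exp_neg_mul hβ1 hb, rpow_sub_one hb.ne']
  field_simp
  ring

end StableLaplaceExponent

/-- For `0 < β < 1` and `c > 0`,
`c^β + ∫₀^∞ (1 - e^{-φt}) (β/Γ(1-β)) t^{-β-1} e^{-ct} dt = (φ+c)^β` for all `φ > 0`. -/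
theorem stmt4 (β c : ℝ) (hβ : 0 < β) (hβ1 : β < 1) (hc : 0 < c) :
    ∀ φ > (0:ℝ),
      c ^ β + ∫ t in Set.Ioi (0:ℝ),
        (1 - Real.exp (-φ * t)) * ((β / Real.Gamma (1 - β)) * t ^ (-β - 1) * Real.exp (-c * t))
        = (φ + c) ^ β := by
  intro φ hφ
  have hφc : 0 < φ + c := by linarith
  have hsplit : (fun t : ℝ =>
      (1 - exp (-φ * t)) * ((β / Gamma (1 - β)) * t ^ (-β - 1) * exp (-c * t)))
      = fun t => β / Gamma (1 - β) * ((1 - exp (-((φ + c) * t))) * t ^ (-β - 1)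
          - (1 - exp (-(c * t))) * t ^ (-β - 1)) := by
    ext t
    rw [show -((φ + c) * t) = -φ * t + -c * t by ring, exp_add, neg_mul c]
    ring
  have hΓ : Gamma (1 - β) ≠ 0 := (Gamma_pos_of_pos (by linarith)).ne'
  rw [hsplit, integral_const_mul,
    integral_sub (integrableOn_one_sub_exp_neg_mul_mul_rpow hβ hβ1 hφc.le)
      (integrableOn_one_sub_exp_neg_mul_mul_rpow hβ hβ1 hc.le),
    integral_one_sub_exp_neg_mul_mul_rpow hβ hβ1 hφc,
    integral_one_sub_exp_neg_mul_mul_rpow hβ hβ1 hc]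
  field_simp
  ring
end

section
/- Let f be a Bernstein function with b = 0 and ν(0,∞) = ∞, let q(λ,t) be the continuous exponentially bounded solution with Laplace transform (in t) equal to (f(φ)/φ)·1/(f(φ)−λ) for λ < 0 fixed, and suppose f is regularly varying at 0+ with index ρ ∈ [0,1). Then Q(λ,t) = ∫₀^t q(λ,s) ds → ∞ as t → ∞; that is, ∫₀^∞ q(λ,t) dt = ∞. -/
/-!
The Laplace transform `L(φ) = f(φ)/φ · 1/(f(φ) - λ)` of `q` is completely monotone along every
progression `x + ℕ`: `f(φ)/φ` is, the differences of `f` are, hence so is `1/(f - λ)`, and complete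
monotonicity is stable under products. This makes `∫₀^∞ e^{-xt} (1 - e^{-t})^m q(t) dt ≥ 0`; after
the substitution `y = e^{-t}` these are integrals of `q` against the Bernstein basis polynomials, so
Bernstein approximation on `[0,1]` forces `q ≥ 0`. Regular variation with index `ρ < 1` gives
`f(2x) ≤ κ f(x)` near `0` for some `κ < 2`, so `f(φ)/φ`, and with it `L(φ)`, is unbounded as
`φ → 0+`. As `q ≥ 0`, `L(φ)` is at most `sup_t ∫₀^t q`, which is therefore infinite.
-/

open MeasureTheory Set Filter intervalIntegral Real Topology fwdDiff unitInterval

/-- `u` is completely monotone up to order `n`: `(-Δ)^j u ≥ 0` for `j ≤ n`. -/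
def IsCMUpTo : ℕ → (ℕ → ℝ) → Prop
  | 0, u => 0 ≤ u
  | n + 1, u => 0 ≤ u ∧ IsCMUpTo n (-Δ_[1] u)

def IsCM (u : ℕ → ℝ) : Prop := ∀ n, IsCMUpTo n u

namespace IsCMUpTo

variable {n : ℕ} {u v : ℕ → ℝ}

theorem of_succ (h : IsCMUpTo (n + 1) u) : IsCMUpTo n u := by
  induction n generalizing u with
  | zero => exact h.1
  | succ n ih => exact ⟨h.1, ih h.2⟩

theorem comp_add_one (h : IsCMUpTo n u) : IsCMUpTo n (fun k => u (k + 1)) := by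
  induction n generalizing u with
  | zero => exact fun k => h (k + 1)
  | succ n ih => exact ⟨fun k => h.1 (k + 1), ih h.2⟩

theorem add (hu : IsCMUpTo n u) (hv : IsCMUpTo n v) : IsCMUpTo n (u + v) := by
  induction n generalizing u v with
  | zero => exact add_nonneg hu hv
  | succ n ih =>
    refine ⟨add_nonneg hu.1 hv.1, ?_⟩
    rw [fwdDiff_add, neg_add]
    exact ih hu.2 hv.2

theorem mul (hu : IsCMUpTo n u) (hv : IsCMUpTo n v) : IsCMUpTo n (u * v) := by
  induction n generalizing u v with
  | zero => exact mul_nonneg hu hv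
  | succ n ih =>
    refine ⟨mul_nonneg hu.1 hv.1, ?_⟩
    have hΔ : -Δ_[1] (u * v) = -Δ_[1] u * (fun k => v (k + 1)) + u * -Δ_[1] v := by
      ext k; simp only [fwdDiff, Pi.mul_apply, Pi.neg_apply, Pi.add_apply]; ring
    rw [hΔ]
    exact (ih hu.2 hv.comp_add_one.of_succ).add (ih hu.of_succ hv.2)

end IsCMUpTo

namespace IsCM

variable {u v : ℕ → ℝ}

theorem nonneg (h : IsCM u) (k : ℕ) : 0 ≤ u k := h 0 k

theorem neg_fwdDiff (h : IsCM u) : IsCM (-Δ_[1] u) := fun n => (h (n + 1)).2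

theorem add (hu : IsCM u) (hv : IsCM v) : IsCM (u + v) := fun n => (hu n).add (hv n)

theorem mul (hu : IsCM u) (hv : IsCM v) : IsCM (u * v) := fun n => (hu n).mul (hv n)

theorem inv {b : ℕ → ℝ} (hb : ∀ k, 0 < b k) (hΔ : IsCM (Δ_[1] b)) : IsCM b⁻¹ := by
  intro n
  induction n with
  | zero => exact fun k => (inv_pos.2 (hb k)).le
  | succ n ih =>
    refine ⟨fun k => (inv_pos.2 (hb k)).le, ?_⟩
    have hΔinv : -Δ_[1] b⁻¹ = Δ_[1] b * b⁻¹ * (fun k => (b (k + 1))⁻¹) := by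
      ext k
      have := (hb k).ne'
      have := (hb (k + 1)).ne'
      simp only [fwdDiff, Pi.mul_apply, Pi.neg_apply, Pi.inv_apply]
      field_simp
      ring
    rw [hΔinv]
    exact ((hΔ n).mul ih).mul ih.comp_add_one

theorem integral {α : Type*} [MeasurableSpace α] {μ : Measure α} {F : ℕ → α → ℝ}
    (hF : ∀ k, Integrable (F k) μ) (hcm : ∀ᵐ s ∂μ, IsCM (F · s)) :
    IsCM (fun k => ∫ s, F k s ∂μ) := by
  intro n
  induction n generalizing F with
  | zero => exact fun k => integral_nonneg_of_ae (hcm.mono fun s hs => hs.nonneg k)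
  | succ n ih =>
    refine ⟨fun k => integral_nonneg_of_ae (hcm.mono fun s hs => hs.nonneg k), ?_⟩
    have hΔ : -Δ_[1] (fun k => ∫ s, F k s ∂μ) = fun k => ∫ s, -(F (k + 1) s - F k s) ∂μ := by
      ext k
      simp only [fwdDiff, Pi.neg_apply, MeasureTheory.integral_neg, integral_sub (hF _) (hF _)]
    rw [hΔ]
    exact ih (fun k => ((hF _).sub (hF _)).neg) (hcm.mono fun s hs => hs.neg_fwdDiff)

end IsCM

theorem isCM_geometric {c r : ℝ} (hc : 0 ≤ c) (hr₀ : 0 ≤ r) (hr₁ : r ≤ 1) :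
    IsCM (fun k => c * r ^ k) := by
  intro n
  induction n generalizing c with
  | zero => exact fun k => by positivity
  | succ n ih =>
    refine ⟨fun k => by positivity, ?_⟩
    convert ih (mul_nonneg hc (sub_nonneg.2 hr₁)) using 1
    ext k
    simp only [fwdDiff, Pi.neg_apply, pow_succ]
    ring

theorem isCM_const {c : ℝ} (hc : 0 ≤ c) : IsCM (fun _ => c) := by
  simpa using isCM_geometric hc zero_le_one le_rfl

theorem exp_neg_add_natCast_mul (x s : ℝ) (k : ℕ) :
    exp (-(x + k) * s) = exp (-x * s) * exp (-s) ^ k := by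
  rw [← exp_nat_mul, ← exp_add]
  ring_nf

theorem integral_exp_neg_mul_Ioc {ψ : ℝ} (hψ : ψ ≠ 0) {s : ℝ} (hs : 0 ≤ s) :
    ∫ u in Ioc 0 s, exp (-ψ * u) = (1 - exp (-ψ * s)) / ψ := by
  rw [← intervalIntegral.integral_of_le hs,
    intervalIntegral.integral_comp_mul_left (fun u => exp u) (neg_ne_zero.2 hψ), integral_exp]
  simp only [smul_eq_mul, mul_zero, exp_zero]
  field_simp
  ring

theorem one_sub_exp_neg_mul_le {φ s : ℝ} (hs : 0 ≤ s) :
    1 - exp (-φ * s) ≤ max φ 1 * min s 1 := by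
  have hlin : 1 - exp (-φ * s) ≤ φ * s := by linarith [add_one_le_exp (-φ * s)]
  have hone : 1 - exp (-φ * s) ≤ 1 := by linarith [exp_pos (-φ * s)]
  rcases le_total s 1 with h | h
  · rw [min_eq_left h]
    exact hlin.trans (mul_le_mul_of_nonneg_right (le_max_left _ _) hs)
  · rw [min_eq_right h, mul_one]
    exact hone.trans (le_max_right _ _)

/-- Lévy–Khintchine form of a Bernstein function with killing term `a`, no drift and Lévy
measure `ν`. -/
def HasBernsteinRepr (f : ℝ → ℝ) (a : ℝ) (ν : Measure ℝ) : Prop :=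
  ∀ φ > (0:ℝ), f φ = a + ∫ s in Ioi (0:ℝ), (1 - exp (-φ * s)) ∂ν

section BernsteinFunction

variable {f : ℝ → ℝ} {a : ℝ} {ν : Measure ℝ}

theorem integrableOn_one_sub_exp_neg_mul
    (hνint : ∫⁻ s in Ioi (0:ℝ), ENNReal.ofReal (min s 1) ∂ν < ⊤) {φ : ℝ} (hφ : 0 ≤ φ) :
    IntegrableOn (fun s => 1 - exp (-φ * s)) (Ioi 0) ν := by
  have hmin : IntegrableOn (fun s => min s 1) (Ioi 0) ν :=
    (lintegral_ofReal_ne_top_iff_integrable (by fun_prop)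
      ((ae_restrict_iff' measurableSet_Ioi).2 (ae_of_all _ fun s hs =>
        le_min (le_of_lt hs) zero_le_one))).1 hνint.ne
  refine (hmin.const_mul (max φ 1)).mono' (by fun_prop) ((ae_restrict_iff' measurableSet_Ioi).2
    (ae_of_all _ fun s hs => ?_))
  have hs : (0 : ℝ) ≤ s := le_of_lt hs
  rw [norm_of_nonneg (by nlinarith [exp_le_one_iff.2 (by nlinarith : -φ * s ≤ 0)])]
  exact one_sub_exp_neg_mul_le hs

theorem HasBernsteinRepr.nonneg (ha : 0 ≤ a)
    (hf : HasBernsteinRepr f a ν)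
    {φ : ℝ} (hφ : 0 < φ) : 0 ≤ f φ := by
  rw [hf φ hφ]
  refine add_nonneg ha (setIntegral_nonneg measurableSet_Ioi fun s hs => ?_)
  have : -φ * s ≤ 0 := by nlinarith [mem_Ioi.1 hs]
  linarith [exp_le_one_iff.2 this]

theorem HasBernsteinRepr.monotoneOn
    (hνint : ∫⁻ s in Ioi (0:ℝ), ENNReal.ofReal (min s 1) ∂ν < ⊤)
    (hf : HasBernsteinRepr f a ν) :
    MonotoneOn f (Ioi 0) := by
  intro φ hφ ψ hψ hle
  rw [hf φ hφ, hf ψ hψ]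
  refine add_le_add_right ?_ a
  refine setIntegral_mono_on (integrableOn_one_sub_exp_neg_mul hνint (le_of_lt hφ))
    (integrableOn_one_sub_exp_neg_mul hνint (le_of_lt hψ)) measurableSet_Ioi fun s hs => ?_
  have : -ψ * s ≤ -φ * s := by nlinarith [mem_Ioi.1 hs]
  linarith [exp_le_exp.2 this]

theorem HasBernsteinRepr.isCM_div_self (ha : 0 ≤ a)
    (hνint : ∫⁻ s in Ioi (0:ℝ), ENNReal.ofReal (min s 1) ∂ν < ⊤)
    (hf : HasBernsteinRepr f a ν)
    {x : ℝ} (hx : 0 < x) : IsCM (fun k : ℕ => f (x + k) / (x + k)) := by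
  have hkernel : ∀ s ∈ Ioi (0:ℝ), IsCM (fun k : ℕ => (1 - exp (-(x + k) * s)) / (x + k)) := by
    intro s hs
    have hrepr : (fun k : ℕ => (1 - exp (-(x + k) * s)) / (x + k))
        = fun k : ℕ => ∫ u in Ioc 0 s, exp (-x * u) * exp (-u) ^ k := by
      ext k
      simp only [← exp_neg_add_natCast_mul]
      rw [integral_exp_neg_mul_Ioc (by positivity) (le_of_lt hs)]
    rw [hrepr]
    refine IsCM.integral (fun k => (Continuous.integrableOn_Ioc (by fun_prop)))
      ((ae_restrict_iff' measurableSet_Ioc).2 (ae_of_all _ fun u hu => ?_))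
    exact isCM_geometric (exp_pos _).le (exp_pos _).le (exp_le_one_iff.2 (by linarith [hu.1]))
  have hinv : IsCM (fun k : ℕ => x + k)⁻¹ := by
    refine IsCM.inv (fun k => by positivity) ?_
    convert isCM_const zero_le_one using 1
    ext k
    simp [fwdDiff]
  have hrepr : (fun k : ℕ => f (x + k) / (x + k))
      = (fun _ => a) * (fun k : ℕ => x + k)⁻¹
        + fun k : ℕ => ∫ s in Ioi 0, (1 - exp (-(x + k) * s)) / (x + k) ∂ν := by
    ext k
    rw [Pi.add_apply, Pi.mul_apply, Pi.inv_apply, hf _ (by positivity), add_div,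
      MeasureTheory.integral_div]
    ring
  rw [hrepr]
  exact ((isCM_const ha).mul hinv).add (IsCM.integral
    (fun k => (integrableOn_one_sub_exp_neg_mul hνint (by positivity)).div_const _)
    ((ae_restrict_iff' measurableSet_Ioi).2 (ae_of_all _ hkernel)))

theorem HasBernsteinRepr.isCM_fwdDiff
    (hνint : ∫⁻ s in Ioi (0:ℝ), ENNReal.ofReal (min s 1) ∂ν < ⊤)
    (hf : HasBernsteinRepr f a ν)
    {x : ℝ} (hx : 0 < x) : IsCM (Δ_[1] fun k : ℕ => f (x + k)) := by
  have hint : ∀ k : ℕ, IntegrableOn (fun s => 1 - exp (-(x + k) * s)) (Ioi 0) ν :=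
    fun k => integrableOn_one_sub_exp_neg_mul hνint (by positivity)
  have hkernel : ∀ (k : ℕ) (s : ℝ), (1 - exp (-(x + ↑(k + 1)) * s)) - (1 - exp (-(x + k) * s))
      = exp (-x * s) * (1 - exp (-s)) * exp (-s) ^ k := by
    intro k s
    simp only [exp_neg_add_natCast_mul, pow_succ]
    ring
  have hrepr : Δ_[1] (fun k : ℕ => f (x + k))
      = fun k : ℕ => ∫ s in Ioi 0, exp (-x * s) * (1 - exp (-s)) * exp (-s) ^ k ∂ν := by
    ext k
    rw [fwdDiff, hf _ (by positivity), hf _ (by positivity), add_sub_add_left_eq_sub,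
      ← integral_sub (hint (k + 1)) (hint k)]
    simp only [hkernel]
  rw [hrepr]
  refine IsCM.integral (fun k => ((hint (k + 1)).sub (hint k)).congr
    (ae_of_all _ fun s => hkernel k s)) ((ae_restrict_iff' measurableSet_Ioi).2 (ae_of_all _ ?_))
  intro s hs
  have hs' : exp (-s) ≤ 1 := exp_le_one_iff.2 (by linarith [mem_Ioi.1 hs])
  exact isCM_geometric (mul_nonneg (exp_pos _).le (by linarith)) (exp_pos _).le hs'

theorem HasBernsteinRepr.isCM_div_self_mul_one_div_sub (ha : 0 ≤ a)
    (hνint : ∫⁻ s in Ioi (0:ℝ), ENNReal.ofReal (min s 1) ∂ν < ⊤)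
    (hf : HasBernsteinRepr f a ν) {lam : ℝ} (hlam : lam < 0) {x : ℝ} (hx : 0 < x) :
    IsCM (fun k : ℕ => f (x + k) / (x + k) * (1 / (f (x + k) - lam))) := by
  have hpos : ∀ k : ℕ, 0 < f (x + k) - lam := fun k => by
    linarith [hf.nonneg ha (by positivity : 0 < x + k)]
  have hΔ : Δ_[1] (fun k : ℕ => f (x + k) - lam) = Δ_[1] fun k : ℕ => f (x + k) := by
    ext k
    simp [fwdDiff]
  convert (hf.isCM_div_self ha hνint hx).mul
    (IsCM.inv hpos (hΔ ▸ hf.isCM_fwdDiff hνint hx)) using 1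
  ext k
  simp only [Pi.mul_apply, Pi.inv_apply, one_div]

end BernsteinFunction

theorem isCM_integral_one_sub_exp_pow_mul {q : ℝ → ℝ} {x : ℝ}
    (hint : ∀ k : ℕ, IntegrableOn (fun t => exp (-(x + k) * t) * q t) (Ioi 0))
    (hcm : IsCM (fun k : ℕ => ∫ t in Ioi 0, exp (-(x + k) * t) * q t)) (m : ℕ) :
    IsCM (fun k : ℕ => ∫ t in Ioi 0, (1 - exp (-t)) ^ m * (exp (-(x + k) * t) * q t)) := by
  induction m with
  | zero => simpa using hcm
  | succ m ih =>
    have hint' : ∀ k : ℕ,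
        IntegrableOn (fun t => (1 - exp (-t)) ^ m * (exp (-(x + k) * t) * q t)) (Ioi 0) := by
      intro k
      refine (hint k).bdd_mul (c := 1) (by fun_prop)
        ((ae_restrict_iff' measurableSet_Ioi).2 (ae_of_all _ fun t ht => ?_))
      have h₀ : 0 ≤ 1 - exp (-t) := by
        linarith [exp_le_one_iff.2 (by linarith [mem_Ioi.1 ht] : -t ≤ 0)]
      rw [norm_pow, norm_of_nonneg h₀]
      exact pow_le_one₀ h₀ (by linarith [exp_pos (-t)])
    convert ih.neg_fwdDiff using 1
    ext k
    rw [Pi.neg_apply, fwdDiff, ← integral_sub (hint' (k + 1)) (hint' k),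
      ← MeasureTheory.integral_neg]
    congr 1 with t
    simp only [exp_neg_add_natCast_mul, pow_succ]
    ring

theorem ContinuousMap.integrable_comp_mul {X α : Type*} [TopologicalSpace X] [CompactSpace X]
    [TopologicalSpace α] [MeasurableSpace α] [OpensMeasurableSpace α] {μ : Measure α}
    (G : C(X, ℝ)) {e : α → X} (he : Continuous e) {w : α → ℝ} (hw : Integrable w μ) :
    Integrable (fun t => G (e t) * w t) μ :=
  hw.bdd_mul (G.continuous.comp he).aestronglyMeasurable
    (ae_of_all _ fun _ => G.norm_coe_le_norm _)

theorem continuous_integral_comp_mul {X α : Type*} [TopologicalSpace X] [CompactSpace X]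
    [TopologicalSpace α] [MeasurableSpace α] [OpensMeasurableSpace α] {μ : Measure α}
    {e : α → X} (he : Continuous e) {w : α → ℝ} (hw : Integrable w μ) :
    Continuous fun G : C(X, ℝ) => ∫ t, G (e t) * w t ∂μ := by
  refine (LipschitzWith.of_dist_le' (K := ∫ t, |w t| ∂μ) fun G H => ?_).continuous
  rw [dist_eq_norm, ← integral_sub (G.integrable_comp_mul he hw) (H.integrable_comp_mul he hw),
    mul_comm, ← MeasureTheory.integral_const_mul]
  refine norm_integral_le_of_norm_le (hw.abs.const_mul _) (ae_of_all _ fun t => ?_)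
  rw [← sub_mul, norm_mul, Real.norm_eq_abs (w t), dist_eq_norm]
  exact mul_le_mul_of_nonneg_right ((G - H).norm_coe_le_norm (e t)) (abs_nonneg _)

noncomputable def expNegI (t : ℝ) : I := projIcc 0 1 zero_le_one (exp (-t))

theorem continuous_expNegI : Continuous expNegI := continuous_projIcc.comp (by fun_prop)

theorem coe_expNegI {t : ℝ} (ht : 0 ≤ t) : (expNegI t : ℝ) = exp (-t) := by
  rw [expNegI, projIcc_of_mem _ ⟨(exp_pos _).le, exp_le_one_iff.2 (by linarith)⟩]

section Moments

variable {w : ℝ → ℝ}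

theorem integral_bernstein_comp_expNegI_mul (n k : ℕ) :
    ∫ t in Ioi 0, bernstein n k (expNegI t) * w t
      = n.choose k * ∫ t in Ioi 0, exp (-t) ^ k * (1 - exp (-t)) ^ (n - k) * w t := by
  rw [← MeasureTheory.integral_const_mul]
  refine setIntegral_congr_fun measurableSet_Ioi fun t ht => ?_
  rw [bernstein_apply, coe_expNegI (le_of_lt ht)]
  ring

theorem integral_comp_expNegI_mul_nonneg (hw : IntegrableOn w (Ioi 0))
    (hmom : ∀ j m : ℕ, 0 ≤ ∫ t in Ioi 0, exp (-t) ^ j * (1 - exp (-t)) ^ m * w t)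
    {G : C(I, ℝ)} (hG : 0 ≤ G) : 0 ≤ ∫ t in Ioi 0, G (expNegI t) * w t := by
  refine ge_of_tendsto (((continuous_integral_comp_mul continuous_expNegI hw).tendsto G).comp
    (bernsteinApproximation_uniform G)) (Eventually.of_forall fun n => ?_)
  simp only [Function.comp_apply, bernsteinApproximation.apply, smul_eq_mul, Finset.sum_mul]
  have hterm : ∀ k : Fin (n + 1),
      ∫ t in Ioi 0, bernstein n k (expNegI t) * G (bernstein.z k) * w t
        = G (bernstein.z k) * ∫ t in Ioi 0, bernstein n k (expNegI t) * w t := by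
    intro k
    rw [← MeasureTheory.integral_const_mul]
    congr 1 with t
    ring
  rw [integral_finsetSum _ fun k _ => ?_]
  · simp only [hterm, integral_bernstein_comp_expNegI_mul]
    exact Finset.sum_nonneg fun k _ =>
      mul_nonneg (hG _) (mul_nonneg (Nat.cast_nonneg _) (hmom _ _))
  · simpa only [mul_right_comm _ (G _)] using
      ((bernstein n k).integrable_comp_mul continuous_expNegI hw).mul_const (G (bernstein.z k))

theorem nonneg_of_moments_nonneg (hw : Continuous w) (hwi : IntegrableOn w (Ioi 0))
    (hmom : ∀ j m : ℕ, 0 ≤ ∫ t in Ioi 0, exp (-t) ^ j * (1 - exp (-t)) ^ m * w t)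
    {t₀ : ℝ} (ht₀ : 0 < t₀) : 0 ≤ w t₀ := by
  by_contra! hneg
  have hcont : ContinuousAt (fun x => w (-log x)) (exp (-t₀)) :=
    hw.continuousAt.comp (continuousAt_log (exp_pos _).ne').neg
  obtain ⟨r, hr, hball⟩ := Metric.eventually_nhds_iff.1
    (hcont.eventually (gt_mem_nhds (by simpa using hneg)))
  let G : C(I, ℝ) := ⟨fun x => max 0 (r - |(x : ℝ) - exp (-t₀)|), by fun_prop⟩
  let h : ℝ → ℝ := fun t => G (expNegI t) * w t
  have hcont_h : Continuous h := (G.continuous.comp continuous_expNegI).mul hw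
  have h_nonpos : ∀ t ∈ Ioi (0:ℝ), h t ≤ 0 := by
    intro t ht
    have hG : G (expNegI t) = max 0 (r - |exp (-t) - exp (-t₀)|) := by
      simp [G, coe_expNegI (le_of_lt ht)]
    by_cases hnear : |exp (-t) - exp (-t₀)| < r
    · have : w t < 0 := by simpa using hball (y := exp (-t)) hnear
      exact mul_nonpos_of_nonneg_of_nonpos (hG ▸ le_max_left _ _) this.le
    · simp [h, hG, max_eq_left (by linarith : r - |exp (-t) - exp (-t₀)| ≤ 0)]
  have h_neg : ∫ t in Ioi 0, h t < 0 := by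
    have hpos : 0 < ∫ t in Ioi 0, -h t := by
      have h_nonneg : 0 ≤ᵐ[volume.restrict (Ioi 0)] fun t => -h t :=
        (ae_restrict_iff' measurableSet_Ioi).2
          (ae_of_all _ fun t ht => neg_nonneg.2 (h_nonpos t ht))
      refine (setIntegral_pos_iff_support_of_nonneg_ae h_nonneg
        (G.integrable_comp_mul continuous_expNegI hwi).neg).2 ?_
      refine (hcont_h.neg.isOpen_support.inter isOpen_Ioi).measure_pos _ ⟨t₀, ?_, ht₀⟩
      simp [h, G, coe_expNegI ht₀.le, hneg.ne, hr]
    rw [MeasureTheory.integral_neg] at hpos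
    linarith
  exact h_neg.not_ge (integral_comp_expNegI_mul_nonneg hwi hmom fun x => le_max_left _ _)

end Moments

theorem frequently_lt_div_self {f : ℝ → ℝ} {ρ : ℝ} (hρ : ρ < 1) (hpos : ∀ x > (0:ℝ), 0 < f x)
    (hrv : Tendsto (fun x => f (2 * x) / f x) (𝓝[>] 0) (𝓝 (2 ^ ρ))) (B : ℝ) :
    ∃ᶠ x in 𝓝[>] 0, B < f x / x := by
  obtain ⟨κ, hκρ, hκ2⟩ : ∃ κ, (2:ℝ) ^ ρ < κ ∧ κ < 2 :=
    exists_between (by simpa using rpow_lt_rpow_of_exponent_lt one_lt_two hρ)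
  have hκ : 0 < κ := (rpow_pos_of_pos two_pos ρ).trans hκρ
  obtain ⟨x₀, hx₀ : 0 < x₀, hsub⟩ :=
    mem_nhdsGT_iff_exists_Ioc_subset.1 (hrv.eventually (gt_mem_nhds hκρ))
  have hdoubling : ∀ x ∈ Ioc 0 x₀, f (2 * x) ≤ κ * f x := fun x hx =>
    ((div_lt_iff₀ (hpos x hx.1)).1 (hsub hx)).le
  have hiter : ∀ i : ℕ, f x₀ ≤ κ ^ i * f (x₀ / 2 ^ i) := by
    intro i
    induction i with
    | zero => simp
    | succ i ih =>
      have hx : x₀ / 2 ^ (i + 1) ∈ Ioc 0 x₀ :=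
        ⟨by positivity, div_le_self (le_of_lt hx₀) (one_le_pow₀ one_le_two)⟩
      have h2x : 2 * (x₀ / 2 ^ (i + 1)) = x₀ / 2 ^ i := by rw [pow_succ]; field_simp
      calc f x₀ ≤ κ ^ i * f (x₀ / 2 ^ i) := ih
        _ ≤ κ ^ i * (κ * f (x₀ / 2 ^ (i + 1))) := by
          rw [← h2x]; exact mul_le_mul_of_nonneg_left (hdoubling _ hx) (by positivity)
        _ = κ ^ (i + 1) * f (x₀ / 2 ^ (i + 1)) := by ring
  have hlower : ∀ i : ℕ, f x₀ / x₀ * (2 / κ) ^ i ≤ f (x₀ / 2 ^ i) / (x₀ / 2 ^ i) := by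
    intro i
    rw [div_pow, div_div_eq_mul_div, le_div_iff₀ (by positivity)]
    calc f x₀ / x₀ * (2 ^ i / κ ^ i) * x₀ = f x₀ / κ ^ i * 2 ^ i := by field_simp
      _ ≤ f (x₀ / 2 ^ i) * 2 ^ i := by
        gcongr
        rw [div_le_iff₀ (by positivity)]
        linarith [hiter i]
  have hseq : Tendsto (fun i : ℕ => x₀ / 2 ^ i) atTop (𝓝[>] 0) :=
    tendsto_nhdsWithin_of_tendsto_nhds_of_eventually_within _
      (tendsto_const_nhds.div_atTop (tendsto_pow_atTop_atTop_of_one_lt one_lt_two))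
      (Eventually.of_forall fun i => div_pos hx₀ (by positivity))
  have hgrow : Tendsto (fun i : ℕ => f (x₀ / 2 ^ i) / (x₀ / 2 ^ i)) atTop atTop :=
    tendsto_atTop_mono hlower (((tendsto_pow_atTop_atTop_of_one_lt
      ((one_lt_div hκ).2 hκ2)).const_mul_atTop (div_pos (hpos x₀ hx₀) hx₀)))
  exact hseq.frequently (hgrow.eventually_gt_atTop B).frequently

theorem tendsto_intervalIntegral_atTop_of_laplace {q : ℝ → ℝ} (hq : Continuous q)
    (hq₀ : ∀ t > (0:ℝ), 0 ≤ q t)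
    (hint : ∀ φ > (0:ℝ), IntegrableOn (fun t => exp (-φ * t) * q t) (Ioi 0))
    (hunb : ∀ M : ℝ, ∃ φ > (0:ℝ), M < ∫ t in Ioi 0, exp (-φ * t) * q t) :
    Tendsto (fun t => ∫ s in (0:ℝ)..t, q s) atTop atTop := by
  refine tendsto_atTop.2 fun M => ?_
  obtain ⟨φ, hφ, hM⟩ := hunb M
  filter_upwards [(intervalIntegral_tendsto_integral_Ioi 0 (hint φ hφ) tendsto_id).eventually
    (lt_mem_nhds hM), eventually_ge_atTop 0] with T hT hT₀
  refine hT.le.trans (integral_mono_on_of_le_Ioo hT₀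
    (Continuous.intervalIntegrable (by fun_prop) _ _) (hq.intervalIntegrable _ _) fun t ht => ?_)
  have : exp (-φ * t) ≤ 1 := exp_le_one_iff.2 (by nlinarith [ht.1])
  nlinarith [hq₀ t ht.1]

theorem nonneg_of_isCM_laplace {q : ℝ → ℝ} (hq : Continuous q)
    (hint : ∀ φ > (0:ℝ), IntegrableOn (fun t => exp (-φ * t) * q t) (Ioi 0))
    (hcm : IsCM (fun k : ℕ => ∫ t in Ioi 0, exp (-(1 + k) * t) * q t)) {t : ℝ} (ht : 0 < t) :
    0 ≤ q t := by
  refine (mul_nonneg_iff_of_pos_left (exp_pos (-t))).1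
    (nonneg_of_moments_nonneg (w := fun t => exp (-t) * q t) (by fun_prop)
      (by simpa using hint 1 one_pos) (fun j m => ?_) ht)
  convert (isCM_integral_one_sub_exp_pow_mul (fun k => hint _ (by positivity)) hcm m).nonneg j
    using 3 with s
  rw [exp_neg_add_natCast_mul, neg_mul, one_mul]
  ring

theorem frequently_lt_div_self_mul_one_div_sub {f : ℝ → ℝ} {lam : ℝ} (hlam : lam < 0)
    (hpos : ∀ x > (0:ℝ), 0 < f x) (hmono : MonotoneOn f (Ioi 0))
    (hfreq : ∀ B : ℝ, ∃ᶠ x in 𝓝[>] 0, B < f x / x) (M : ℝ) :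
    ∃ᶠ φ in 𝓝[>] 0, M < f φ / φ * (1 / (f φ - lam)) := by
  have h₁ : 0 < f 1 - lam := by linarith [hpos 1 one_pos]
  refine ((hfreq (M * (f 1 - lam))).and_eventually (Ioo_mem_nhdsGT one_pos)).mono
    fun φ ⟨hB, hφ⟩ => ?_
  have hφ₁ : f φ - lam ≤ f 1 - lam := by linarith [hmono hφ.1 (mem_Ioi.2 one_pos) hφ.2.le]
  have hφpos : 0 < f φ - lam := by linarith [hpos φ hφ.1]
  calc M < f φ / φ / (f 1 - lam) := (lt_div_iff₀ h₁).2 hB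
    _ ≤ f φ / φ * (1 / (f φ - lam)) := by
      rw [← div_eq_mul_one_div]
      exact div_le_div_of_nonneg_left (div_pos (hpos φ hφ.1) hφ.1).le hφpos hφ₁

theorem stmt19_general (f : ℝ → ℝ) (a : ℝ) (ha : 0 ≤ a) (ν : Measure ℝ)
    (hνint : ∫⁻ s in Set.Ioi (0:ℝ), ENNReal.ofReal (min s 1) ∂ν < ⊤)
    (hf : ∀ φ > (0:ℝ), f φ = a + ∫ s in Set.Ioi (0:ℝ), (1 - Real.exp (-φ * s)) ∂ν)
    (lam : ℝ) (hlam : lam < 0)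
    (ρ : ℝ) (hρ1 : ρ < 1)
    (hrv : ∀ c > (0:ℝ),
      Tendsto (fun x => f (c * x) / f x) (nhdsWithin 0 (Set.Ioi 0)) (nhds (c ^ ρ)))
    (q : ℝ → ℝ) (hqcont : Continuous q)
    (hqLT : ∀ φ > (0:ℝ),
      ∫ t in Set.Ioi (0:ℝ), Real.exp (-φ * t) * q t = (f φ / φ) * (1 / (f φ - lam))) :
    Tendsto (fun t => ∫ s in (0:ℝ)..t, q s) atTop atTop := by
  have hf : HasBernsteinRepr f a ν := hf
  have hfpos : ∀ φ > (0:ℝ), 0 < f φ := by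
    intro φ hφ
    -- `f x / f x → 1` forces `f x ≠ 0` near `0`
    obtain ⟨x, hx1, hx⟩ :=
      (((hrv 1 one_pos).eventually_ne (by simp : (1:ℝ) ^ ρ ≠ 0)).and (Ioo_mem_nhdsGT hφ)).exists
    exact (lt_of_le_of_ne (hf.nonneg ha hx.1) (fun h => hx1 (by simp [← h]))).trans_le
      (hf.monotoneOn hνint hx.1 hφ hx.2.le)
  have hint : ∀ φ > (0:ℝ), IntegrableOn (fun t => exp (-φ * t) * q t) (Ioi 0) := by
    intro φ hφ
    have hfφ := hfpos φ hφ
    have : 0 < f φ - lam := by linarith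
    exact Integrable.of_integral_ne_zero (by rw [hqLT φ hφ]; positivity)
  have hq₀ : ∀ t > (0:ℝ), 0 ≤ q t := fun t => nonneg_of_isCM_laplace hqcont hint <| by
    convert hf.isCM_div_self_mul_one_div_sub ha hνint hlam one_pos using 2 with k
    exact hqLT _ (by positivity)
  refine tendsto_intervalIntegral_atTop_of_laplace hqcont hq₀ hint fun M => ?_
  obtain ⟨φ, hM, hφ⟩ := ((frequently_lt_div_self_mul_one_div_sub hlam hfpos (hf.monotoneOn hνint)
    (frequently_lt_div_self hρ1 hfpos (hrv 2 two_pos)) M).and_eventually self_mem_nhdsWithin).exists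
  exact ⟨φ, hφ, hqLT φ hφ ▸ hM⟩

/-- Let `f` be a Bernstein function with `b = 0` and `ν(0,∞) = ∞`, let `q(λ,·)` be the
continuous exponentially bounded function with Laplace transform
`φ ↦ (f(φ)/φ)·1/(f(φ)−λ)` for a fixed `λ < 0`, and suppose `f` is regularly varying at
`0+` with index `ρ ∈ [0,1)`.  Then `Q(λ,t) = ∫₀^t q(λ,s) ds → ∞` as `t → ∞`;
that is, `∫₀^∞ q(λ,t) dt = ∞`. -/
theorem stmt19 (f : ℝ → ℝ) (a : ℝ) (ha : 0 ≤ a) (ν : Measure ℝ)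
    (hνint : ∫⁻ s in Set.Ioi (0:ℝ), ENNReal.ofReal (min s 1) ∂ν < ⊤)
    (hνinf : ν (Set.Ioi (0:ℝ)) = ⊤)
    (hf : ∀ φ > (0:ℝ), f φ = a + ∫ s in Set.Ioi (0:ℝ), (1 - Real.exp (-φ * s)) ∂ν)
    (lam : ℝ) (hlam : lam < 0)
    (ρ : ℝ) (hρ0 : 0 ≤ ρ) (hρ1 : ρ < 1)
    (hrv : ∀ c > (0:ℝ),
      Tendsto (fun x => f (c * x) / f x) (nhdsWithin 0 (Set.Ioi 0)) (nhds (c ^ ρ)))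
    (q : ℝ → ℝ) (hqcont : Continuous q)
    (hqbdd : ∃ C c : ℝ, ∀ t ≥ (0:ℝ), |q t| ≤ C * Real.exp (c * t))
    (hqLT : ∀ φ > (0:ℝ),
      ∫ t in Set.Ioi (0:ℝ), Real.exp (-φ * t) * q t = (f φ / φ) * (1 / (f φ - lam))) :
    Tendsto (fun t => ∫ s in (0:ℝ)..t, q s) atTop atTop :=
  stmt19_general f a ha ν hνint hf lam hlam ρ hρ1 hrv q hqcont hqLT
end
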